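/- Let S = k[α₀,α₁,α₂] over a field k of characteristic 0 or > d, F a nonzero degree-d form in the dual variables, G = α₀ ∘ F ≠ 0, and suppose Ann(F)_{≤e} ⊆ (α₀) for some e. Then for every a ≤ e − 1, multiplication by α₀ gives a bijection Ann(G)_a → Ann(F)_{a+1}, and consequently the Hilbert functions f of S/Ann(F) and g of S/Ann(G) satisfy f(a+1) = a + 2 + g(a) for all a ≤ e − 1. -/

import Mathlib

open MvPolynomial

variable {k : Type*} [Field k]

open scoped Classical in
/-- The contraction (apolarity) action of `S = k[α₀,α₁,α₂]` on the dual polynomial ring. -/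
noncomputable def contract (p f : MvPolynomial (Fin 3) k) : MvPolynomial (Fin 3) k :=
  (AddMonoidAlgebra.coeff p).sum fun a c => (AddMonoidAlgebra.coeff f).sum fun b d => if a ≤ b then monomial (b - a) (c * d) else 0

/-- The degree-`a` graded piece `Ann(F)_a` of the apolar ideal of `F` (the set
`{σ ∈ S_a : σ ∘ F = 0}` is a linear subspace, and we record it as the span of this set). -/
noncomputable def annPiece (F : MvPolynomial (Fin 3) k) (a : ℕ) :
    Submodule k (MvPolynomial (Fin 3) k) :=
  Submodule.span k
    {σ | σ ∈ homogeneousSubmodule (Fin 3) k a ∧ contract σ F = 0}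

/-- The Hilbert function of `S/Ann(F)`. -/
noncomputable def hilbAnn (F : MvPolynomial (Fin 3) k) (a : ℕ) : ℕ :=
  Module.finrank k ↥(homogeneousSubmodule (Fin 3) k a) -
    Module.finrank k ↥(annPiece F a)

/-!
Since `(σ * τ) ∘ F = τ ∘ (σ ∘ F)`, multiplication by `α₀ = X 0` sends `Ann(G)_a` into
`Ann(F)_{a+1}`. It is injective because `S` is a domain, and surjective because by hypothesis
every `σ ∈ Ann(F)_{a+1}` is `α₀ τ`, where `τ` is forced to be homogeneous of degree `a` and
to annihilate `G`. So the two annihilator pieces have the same dimension, and the relation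
between the Hilbert functions is `dim S_{a+1} = (a + 2) + dim S_a`.
-/

namespace MvPolynomial

theorem IsHomogeneous.of_X_mul {σ R : Type*} [CommSemiring R] {τ : MvPolynomial σ R} {i : σ}
    {n : ℕ} (h : (X i * τ).IsHomogeneous (n + 1)) : τ.IsHomogeneous n := by
  intro d hd
  rw [← coeff_X_mul d i τ] at hd
  have := h hd
  rw [map_add, Finsupp.weight_single] at this
  simp only [Pi.one_apply, smul_eq_mul, mul_one] at this
  omega

theorem finrank_homogeneousSubmodule {σ : Type*} [Fintype σ] (n : ℕ) :
    Module.finrank k (homogeneousSubmodule σ k n) = (Fintype.card σ).multichoose n := by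
  classical
  have hdeg : {d : σ →₀ ℕ | d.degree = n}
      = ↑(Finset.univ.finsuppAntidiag n : Finset (σ →₀ ℕ)) := by
    ext d
    simp [Finsupp.degree_eq_sum]
  let b := (basisRestrictSupport k {d : σ →₀ ℕ | d.degree = n}).map
    (LinearEquiv.ofEq _ _ (homogeneousSubmodule_eq_finsupp_supported σ k n)).symm
  rw [Module.finrank_eq_nat_card_basis b, hdeg, Nat.card_coe_set_eq, Set.ncard_coe_finset,
    Finset.card_finsuppAntidiag_nat_eq_multichoose, Finset.card_univ]

instance {σ : Type*} [Finite σ] (n : ℕ) : Module.Finite k (homogeneousSubmodule σ k n) :=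
  Module.Finite.iff_fg.mpr (homogeneousSubmodule_fg σ k n)

end MvPolynomial

theorem contract_monomial_left (a : Fin 3 →₀ ℕ) (c : k) (f : MvPolynomial (Fin 3) k) :
    contract (monomial a c) f = (AddMonoidAlgebra.coeff f).sum
      fun b d => if a ≤ b then monomial (b - a) (c * d) else 0 := by
  rw [contract, ← single_eq_monomial, AddMonoidAlgebra.coeff_single]
  exact Finsupp.sum_single_index (by simp)

theorem contract_add_left (p q f : MvPolynomial (Fin 3) k) :
    contract (p + q) f = contract p f + contract q f := by
  rw [contract, AddMonoidAlgebra.coeff_add, Finsupp.sum_add_index' (by simp)]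
  · rfl
  · intro a c₁ c₂
    rw [← Finsupp.sum_add]
    refine Finsupp.sum_congr fun b _ => ?_
    split_ifs <;> simp [add_mul]

theorem contract_add_right (p f g : MvPolynomial (Fin 3) k) :
    contract p (f + g) = contract p f + contract p g := by
  rw [contract, contract, contract, ← Finsupp.sum_add]
  refine Finsupp.sum_congr fun a _ => ?_
  rw [AddMonoidAlgebra.coeff_add, Finsupp.sum_add_index' (by simp)]
  intro b d₁ d₂
  split_ifs <;> simp [mul_add]

theorem contract_smul_left (c : k) (p f : MvPolynomial (Fin 3) k) :
    contract (c • p) f = c • contract p f := by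
  rw [contract, contract, AddMonoidAlgebra.coeff_smul, Finsupp.sum_smul_index (by simp),
    Finsupp.smul_sum]
  refine Finsupp.sum_congr fun a _ => ?_
  rw [Finsupp.smul_sum]
  refine Finsupp.sum_congr fun b _ => ?_
  split_ifs <;> simp [smul_monomial, mul_assoc]

theorem contract_zero_right (p : MvPolynomial (Fin 3) k) : contract p 0 = 0 := by
  simp [contract]

theorem contract_monomial_monomial (a b : Fin 3 →₀ ℕ) (c d : k) :
    contract (monomial a c) (monomial b d) = if a ≤ b then monomial (b - a) (c * d) else 0 := by
  rw [contract_monomial_left, ← single_eq_monomial b d, AddMonoidAlgebra.coeff_single,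
    Finsupp.sum_single_index (by simp)]

theorem contract_mul (p q f : MvPolynomial (Fin 3) k) :
    contract (p * q) f = contract q (contract p f) := by
  induction p using MvPolynomial.induction_on' generalizing f with
  | add p₁ p₂ h₁ h₂ =>
    rw [add_mul, contract_add_left, h₁, h₂, contract_add_left, contract_add_right]
  | monomial a c =>
  induction q using MvPolynomial.induction_on' generalizing f with
  | add q₁ q₂ h₁ h₂ => rw [mul_add, contract_add_left, h₁, h₂, contract_add_left]
  | monomial a' c' =>
  induction f using MvPolynomial.induction_on' with
  | add f₁ f₂ h₁ h₂ => simp only [contract_add_right, h₁, h₂]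
  | monomial b d =>
  rw [monomial_mul, contract_monomial_monomial, contract_monomial_monomial]
  by_cases hab : a ≤ b
  · simp only [if_pos hab, contract_monomial_monomial, tsub_tsub, le_tsub_iff_left hab]
    ring_nf
  · rw [if_neg hab, contract_zero_right, if_neg fun h => hab (le_self_add.trans h)]

noncomputable def contractLinear (F : MvPolynomial (Fin 3) k) :
    MvPolynomial (Fin 3) k →ₗ[k] MvPolynomial (Fin 3) k where
  toFun σ := contract σ F
  map_add' p q := contract_add_left p q F
  map_smul' c p := contract_smul_left c p F

theorem annPiece_eq_inf_ker (F : MvPolynomial (Fin 3) k) (a : ℕ) :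
    annPiece F a = homogeneousSubmodule (Fin 3) k a ⊓ LinearMap.ker (contractLinear F) :=
  Submodule.span_eq (homogeneousSubmodule (Fin 3) k a ⊓ LinearMap.ker (contractLinear F))

theorem finrank_annPiece_le (F : MvPolynomial (Fin 3) k) (a : ℕ) :
    Module.finrank k (annPiece F a) ≤ Module.finrank k (homogeneousSubmodule (Fin 3) k a) :=
  Submodule.finrank_mono (annPiece_eq_inf_ker F a ▸ inf_le_left)

theorem bijOn_X_mul_annihilator {F : MvPolynomial (Fin 3) k} {a : ℕ}
    (hsub : ∀ σ ∈ homogeneousSubmodule (Fin 3) k (a + 1),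
      contract σ F = 0 → σ ∈ Ideal.span {(X 0 : MvPolynomial (Fin 3) k)}) :
    Set.BijOn (fun τ => X 0 * τ)
      {τ | τ ∈ homogeneousSubmodule (Fin 3) k a ∧ contract τ (contract (X 0) F) = 0}
      {σ | σ ∈ homogeneousSubmodule (Fin 3) k (a + 1) ∧ contract σ F = 0} := by
  refine ⟨?_, (mul_right_injective₀ (X_ne_zero 0)).injOn, ?_⟩
  · rintro τ ⟨hτ, hτG⟩
    refine ⟨?_, show contract (X 0 * τ) F = 0 by rwa [contract_mul]⟩
    simpa [add_comm] using (isHomogeneous_X k (0 : Fin 3)).mul hτ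
  · rintro σ ⟨hσ, hσF⟩
    obtain ⟨τ, rfl⟩ := Ideal.mem_span_singleton.mp (hsub σ hσ hσF)
    exact ⟨τ, ⟨IsHomogeneous.of_X_mul hσ, by rwa [← contract_mul]⟩, rfl⟩

theorem finrank_annPiece_succ_eq {F : MvPolynomial (Fin 3) k} {a : ℕ}
    (hsub : ∀ σ ∈ homogeneousSubmodule (Fin 3) k (a + 1),
      contract σ F = 0 → σ ∈ Ideal.span {(X 0 : MvPolynomial (Fin 3) k)}) :
    Module.finrank k (annPiece F (a + 1)) = Module.finrank k (annPiece (contract (X 0) F) a) := by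
  have hmap : annPiece F (a + 1)
      = (annPiece (contract (X 0) F) a).map (LinearMap.mulLeft k (X 0)) := by
    apply SetLike.coe_injective
    rw [Submodule.map_coe, annPiece_eq_inf_ker, annPiece_eq_inf_ker]
    exact (bijOn_X_mul_annihilator hsub).image_eq.symm
  rw [hmap]
  exact (Submodule.equivMapOfInjective _ (mul_right_injective₀ (X_ne_zero 0)) _).finrank_eq.symm

theorem ann_bijection_and_hilbert_relation_general
    (F : MvPolynomial (Fin 3) k)
    (e : ℕ)
    (hsub : ∀ a ≤ e, ∀ σ ∈ homogeneousSubmodule (Fin 3) k a,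
      contract σ F = 0 → σ ∈ Ideal.span {(X 0 : MvPolynomial (Fin 3) k)}) :
    ∀ a : ℕ, a + 1 ≤ e →
      Set.BijOn (fun τ => X 0 * τ)
        {τ | τ ∈ homogeneousSubmodule (Fin 3) k a ∧ contract τ (contract (X 0) F) = 0}
        {σ | σ ∈ homogeneousSubmodule (Fin 3) k (a + 1) ∧ contract σ F = 0} ∧
      hilbAnn F (a + 1) = a + 2 + hilbAnn (contract (X 0) F) a := by
  intro a ha
  have hsub' := hsub (a + 1) ha
  refine ⟨bijOn_X_mul_annihilator hsub', ?_⟩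
  have hdim : Module.finrank k (homogeneousSubmodule (Fin 3) k (a + 1))
      = a + 2 + Module.finrank k (homogeneousSubmodule (Fin 3) k a) := by
    simp only [finrank_homogeneousSubmodule, Fintype.card_fin, Nat.multichoose_succ_succ 2 a,
      Nat.multichoose_two]
  have hle := finrank_annPiece_le (contract (X 0) F) a
  rw [hilbAnn, hilbAnn, finrank_annPiece_succ_eq hsub', hdim]
  omega

/-- Part of the proof of Lemma 4.2.  Let `F ≠ 0` be a ternary degree-`d` form,
`G = α₀ ∘ F ≠ 0`, and suppose `Ann(F)_{≤ e} ⊆ (α₀)`.  Then for every `a ≤ e − 1`,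
multiplication by `α₀` is a bijection `Ann(G)_a → Ann(F)_{a+1}`, and consequently the
Hilbert functions `f` of `S/Ann(F)` and `g` of `S/Ann(G)` satisfy
`f(a+1) = a + 2 + g(a)` for all `a ≤ e − 1`. -/
theorem ann_bijection_and_hilbert_relation {d : ℕ} (hd : 0 < d)
    (hchar : ∀ i : ℕ, 0 < i → i ≤ d → (i : k) ≠ 0)
    (F : MvPolynomial (Fin 3) k) (hF : F ≠ 0) (hFhom : F.IsHomogeneous d)
    (hG : contract (X 0) F ≠ 0)
    (e : ℕ)
    (hsub : ∀ a ≤ e, ∀ σ ∈ homogeneousSubmodule (Fin 3) k a,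
      contract σ F = 0 → σ ∈ Ideal.span {(X 0 : MvPolynomial (Fin 3) k)}) :
    ∀ a : ℕ, a + 1 ≤ e →
      Set.BijOn (fun τ => X 0 * τ)
        {τ | τ ∈ homogeneousSubmodule (Fin 3) k a ∧ contract τ (contract (X 0) F) = 0}
        {σ | σ ∈ homogeneousSubmodule (Fin 3) k (a + 1) ∧ contract σ F = 0} ∧
      hilbAnn F (a + 1) = a + 2 + hilbAnn (contract (X 0) F) a :=
  ann_bijection_and_hilbert_relation_general F e hsub
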